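/- Let S be a semigroup, λ a nonzero cardinal, and n, i positive integers with i ≤ n ≤ λ. Let a₁,…,a_i be distinct elements of λ and b₁,…,b_i be distinct elements of λ, and let s₁,t₁,…,s_i,t_i ∈ S be such that s_j and t_j are inverses of each other in S for each j (s_j = s_j t_j s_j and t_j = t_j s_j t_j). Then the element of 𝓘_λ^n(S) with rows (a₁,…,a_i), (s₁,…,s_i), (b₁,…,b_i) and the element with rows (b₁,…,b_i), (t₁,…,t_i), (a₁,…,a_i) are inverses of each other in 𝓘_λ^n(S). -/

import Mathlib

open Classical

namespace ISemExt

/-- Carrier for the extension `𝓘_λ^n(S)`: an element is a function assigning to each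
pair `(x,y)` of points of `lam` an optional value in `S` (its labelled graph). -/
def Elem (lam S : Type) : Type := lam → lam → Option S

/-- The zero element (the empty map). -/
def zeroE (lam S : Type) : Elem lam S := fun _ _ => none

/-- Multiplication in `𝓘_λ^n(S)`: composition of labelled partial maps,
multiplying the labels along composable pairs. -/
noncomputable def mulE {lam S : Type} [Mul S] (f g : Elem lam S) : Elem lam S :=
  fun x z =>
    if h : ∃ y s t, f x y = some s ∧ g y z = some t then
      some (h.choose_spec.choose * h.choose_spec.choose_spec.choose)
    else none

/-- The graph of an element. -/
def graphOf {lam S : Type} (f : Elem lam S) : Set (lam × lam) :=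
  {p | (f p.1 p.2).isSome}

/-- `Valid n f` says that `f` is an element of `𝓘_λ^n(S)`: it is a partial
injective labelled map (in both directions) of rank at most `n`. -/
def Valid {lam S : Type} (n : ℕ) (f : Elem lam S) : Prop :=
  (∀ ⦃x y₁ y₂⦄, (f x y₁).isSome → (f x y₂).isSome → y₁ = y₂) ∧
  (∀ ⦃x₁ x₂ y⦄, (f x₁ y).isSome → (f x₂ y).isSome → x₁ = x₂) ∧
  (graphOf f).Finite ∧ (graphOf f).ncard ≤ n

/-- The element with rows `(a₁,…,a_i)`, `(s₁,…,s_i)`, `(b₁,…,b_i)`. -/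
noncomputable def mk3 {lam S : Type} {i : ℕ} (a : Fin i → lam) (s : Fin i → S)
    (b : Fin i → lam) : Elem lam S :=
  fun x y => if h : ∃ j, a j = x ∧ b j = y then some (s h.choose) else none

section Mk3

variable {lam S : Type}

lemma mk3_eq_some_iff {i : ℕ} {a b : Fin i → lam} {s : Fin i → S}
    (ha : Function.Injective a) {x y : lam} {v : S} :
    mk3 a s b x y = some v ↔ ∃ j, a j = x ∧ b j = y ∧ v = s j := by
  unfold mk3
  split_ifs with h
  · refine ⟨fun hv => ⟨h.choose, h.choose_spec.1, h.choose_spec.2, (Option.some_inj.mp hv).symm⟩,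
      ?_⟩
    rintro ⟨j, rfl, -, rfl⟩
    rw [ha h.choose_spec.1]
  · simp only [false_iff]
    rintro ⟨j, hx, hy, -⟩
    exact h ⟨j, hx, hy⟩

lemma mk3_apply {i : ℕ} {a b : Fin i → lam} {s : Fin i → S} (ha : Function.Injective a)
    (j : Fin i) : mk3 a s b (a j) (b j) = some (s j) :=
  (mk3_eq_some_iff ha).mpr ⟨j, rfl, rfl, rfl⟩

section Mul

variable [Mul S] {f g : Elem lam S} {x z : lam}

lemma mulE_eq_none (h : ¬∃ y s t, f x y = some s ∧ g y z = some t) : mulE f g x z = none :=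
  dif_neg h

lemma exists_mulE_eq_some (h : ∃ y s t, f x y = some s ∧ g y z = some t) :
    ∃ y s t, f x y = some s ∧ g y z = some t ∧ mulE f g x z = some (s * t) :=
  let ⟨hf, hg⟩ := h.choose_spec.choose_spec.choose_spec
  ⟨_, _, _, hf, hg, dif_pos h⟩

lemma mulE_mk3_mk3 {i : ℕ} {a b c : Fin i → lam} {s u : Fin i → S}
    (ha : Function.Injective a) (hb : Function.Injective b) :
    mulE (mk3 a s b) (mk3 b u c) = mk3 a (fun j => s j * u j) c := by
  funext x z
  by_cases h : ∃ y s' u', mk3 a s b x y = some s' ∧ mk3 b u c y z = some u'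
  · obtain ⟨y, s', u', hs', hu', hmul⟩ := exists_mulE_eq_some h
    obtain ⟨j, rfl, rfl, rfl⟩ := (mk3_eq_some_iff ha).mp hs'
    obtain ⟨k, hk, rfl, rfl⟩ := (mk3_eq_some_iff hb).mp hu'
    obtain rfl : j = k := hb hk.symm
    rw [hmul, mk3_apply ha]
  · rw [mulE_eq_none h]
    rcases hv : mk3 a (fun j => s j * u j) c x z with _ | v
    · rfl
    · obtain ⟨j, rfl, rfl, -⟩ := (mk3_eq_some_iff ha).mp hv
      exact absurd ⟨b j, s j, u j, mk3_apply ha j, mk3_apply hb j⟩ h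

end Mul

end Mk3

theorem mk3_inverses_general (lam S : Type) [Semigroup S]
    (i : ℕ)
    (a b : Fin i → lam) (s t : Fin i → S)
    (ha : Function.Injective a) (hb : Function.Injective b)
    (hinv : ∀ j, s j * t j * s j = s j ∧ t j * s j * t j = t j) :
    mulE (mulE (mk3 a s b) (mk3 b t a)) (mk3 a s b) = mk3 a s b ∧
    mulE (mulE (mk3 b t a) (mk3 a s b)) (mk3 b t a) = mk3 b t a := by
  constructor
  · simp only [mulE_mk3_mk3 ha hb, mulE_mk3_mk3 ha ha, (hinv _).1]
  · simp only [mulE_mk3_mk3 hb ha, mulE_mk3_mk3 hb hb, (hinv _).2]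

/-- If `s_j` and `t_j` are pairwise inverses of each other in `S`, then the elements
with rows `(a,s,b)` and `(b,t,a)` are inverses of each other in `𝓘_λ^n(S)`. -/
theorem mk3_inverses (lam S : Type) [Nonempty lam] [Semigroup S]
    (n i : ℕ) (hn : 0 < n) (hcard : (n : Cardinal) ≤ Cardinal.mk lam)
    (hi : 0 < i) (hin : i ≤ n)
    (a b : Fin i → lam) (s t : Fin i → S)
    (ha : Function.Injective a) (hb : Function.Injective b)
    (hinv : ∀ j, s j * t j * s j = s j ∧ t j * s j * t j = t j) :
    mulE (mulE (mk3 a s b) (mk3 b t a)) (mk3 a s b) = mk3 a s b ∧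
    mulE (mulE (mk3 b t a) (mk3 a s b)) (mk3 b t a) = mk3 b t a :=
  mk3_inverses_general lam S i a b s t ha hb hinv

end ISemExt
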